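/- Let T be a Noetherian regular ring of prime characteristic p, let e ≥ 1, and assume T^{1/p^e} is a ∩-flat T-module. If A = A_1 + ⋯ + A_s is a sum of ideals of T, then Ã^(e) = Ã_1^(e) + ⋯ + Ã_s^(e). -/

import Mathlib

open IsLocalRing

/-- The `q`-th Frobenius power of an ideal: the ideal generated by `q`-th powers of elements. -/
def Ideal.frobPow {R : Type*} [CommSemiring R] (q : ℕ) (I : Ideal R) : Ideal R :=
  Ideal.span ((fun a => a ^ q) '' (I : Set R))

/-- Regularity for a local ring: the maximal ideal is generated by `dim R` elements. -/
def IsRegularLocal (R : Type*) [CommRing R] [IsLocalRing R] : Prop :=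
  ∃ (n : ℕ) (x : Fin n → R), maximalIdeal R = Ideal.span (Set.range x) ∧
    ringKrullDim R = n

/-- A regular (commutative Noetherian) ring: every localization at a prime is regular local. -/
def IsRegularRing' (T : Type*) [CommRing T] : Prop :=
  ∀ (P : Ideal T) [P.IsPrime], IsRegularLocal (Localization.AtPrime P)

/-- `T^{1/p^e}`: the ring `T` viewed as a module over itself by restriction of scalars
along the `e`-th iterate of the Frobenius endomorphism (`t • x = t^{p^e} * x`). -/
def FrobTwist (T : Type*) (p e : ℕ) : Type _ := T

instance FrobTwist.instAddCommGroup {T : Type*} [CommRing T] {p e : ℕ} :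
    AddCommGroup (FrobTwist T p e) :=
  inferInstanceAs (AddCommGroup T)

instance FrobTwist.instModule {T : Type*} [CommRing T] {p e : ℕ} [ExpChar T p] :
    Module T (FrobTwist T p e) :=
  Module.compHom T (iterateFrobenius T p e)

/-- A `∩`-flat module: flat, and tensoring commutes with arbitrary intersections of
submodules of finitely generated modules. -/
def IsInterFlat (T : Type u) [CommRing T] (M : Type v) [AddCommGroup M] [Module T M] : Prop :=
  Module.Flat T M ∧
    ∀ (N : Type u) [AddCommGroup N] [Module T N], Module.Finite T N →
      ∀ 𝒮 : Set (Submodule T N),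
        LinearMap.range (LinearMap.lTensor M (sInf 𝒮).subtype) =
          ⨅ P ∈ 𝒮, LinearMap.range (LinearMap.lTensor M (Submodule.subtype P))

/-- `Ã^{(e)}`: the intersection of all ideals `L` with `A ⊆ L^{[q]}` (`q = p^e`). -/
def Ideal.tilde {T : Type*} [CommSemiring T] (q : ℕ) (A : Ideal T) : Ideal T :=
  sInf { L : Ideal T | A ≤ Ideal.frobPow q L }

/-!
The image of `T^{1/q} ⊗_T L → T^{1/q}` is `L • T^{1/q}`, which is the Frobenius power
`L^{[q]}`, so `∩`-flatness of `T^{1/q}` gives `(⋂ L)^{[q]} = ⋂ L^{[q]}` for every family of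
ideals `L`. Then `Ã^{(e)}` itself lies in `G^e(A)`, i.e. `A ↦ Ã^{(e)}` is left adjoint to
`L ↦ L^{[q]}`, and left adjoints preserve sums.
-/

open LinearMap TensorProduct in
lemma Submodule.map_range_lTensor_subtype_rid {R M : Type*} [CommSemiring R] [AddCommMonoid M]
    [Module R M] {I : Submodule R R} :
    (range <| lTensor M I.subtype).map (TensorProduct.rid R M : M ⊗[R] R →ₗ[R] M) = I • ⊤ := by
  have hlid : (TensorProduct.rid R M).toLinearMap ∘ₗ (TensorProduct.comm R R M).toLinearMap =
      (TensorProduct.lid R M).toLinearMap := TensorProduct.ext' fun _ _ ↦ by simp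
  rw [← map_range_rTensor_subtype_lid, ← comm_comp_rTensor_comp_comm_eq, range_comp,
    range_comp_of_range_eq_top _ (LinearEquiv.range _), ← Submodule.map_comp, hlid]

lemma IsInterFlat.sInf_smul_top {T : Type u} [CommRing T] {M : Type v} [AddCommGroup M]
    [Module T M] (hM : IsInterFlat T M) (S : Set (Ideal T)) :
    sInf S • (⊤ : Submodule T M) = ⨅ L ∈ S, L • (⊤ : Submodule T M) := by
  simp_rw [← Submodule.map_range_lTensor_subtype_rid, hM.2 T inferInstance S,
    Submodule.map_equiv_eq_comap_symm, Submodule.comap_iInf]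

namespace FrobTwist

variable {T : Type*} [CommRing T] {p e : ℕ} [ExpChar T p]

def equiv : T ≃+ FrobTwist T p e := AddEquiv.refl T

lemma smul_equiv (t x : T) : t • (equiv x : FrobTwist T p e) = equiv (t ^ p ^ e * x) := rfl

lemma mem_smul_top_iff (L : Ideal T) (x : T) :
    (equiv x : FrobTwist T p e) ∈ L • (⊤ : Submodule T (FrobTwist T p e)) ↔
      x ∈ Ideal.frobPow (p ^ e) L := by
  constructor
  · intro hx
    simpa using Submodule.smul_induction_on (p := fun y ↦ equiv.symm y ∈ Ideal.frobPow (p ^ e) L)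
      hx (fun a ha y _ ↦ Ideal.mul_mem_right _ _ (Ideal.subset_span ⟨a, ha, rfl⟩))
      fun y z hy hz ↦ by simpa using add_mem hy hz
  · intro hx
    obtain ⟨c, hc, rfl⟩ := Submodule.mem_span_set.mp hx
    rw [map_finsuppSum]
    refine Submodule.sum_mem _ fun y hy ↦ ?_
    obtain ⟨a, ha, rfl⟩ := hc hy
    dsimp only
    rw [smul_eq_mul, mul_comm, ← smul_equiv]
    exact Submodule.smul_mem_smul ha Submodule.mem_top

end FrobTwist

namespace Ideal

variable {T : Type*} [CommRing T]

lemma frobPow_mono (q : ℕ) : Monotone (frobPow (R := T) q) :=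
  fun _ _ h ↦ span_mono (Set.image_mono h)

variable {p e : ℕ} [ExpChar T p]

lemma frobPow_sInf_of_isInterFlat (hflat : IsInterFlat T (FrobTwist T p e)) (S : Set (Ideal T)) :
    frobPow (p ^ e) (sInf S) = ⨅ L ∈ S, frobPow (p ^ e) L := by
  ext x
  simpa only [FrobTwist.mem_smul_top_iff, Submodule.mem_iInf] using
    SetLike.ext_iff.mp (hflat.sInf_smul_top S) (FrobTwist.equiv x)

lemma le_frobPow_tilde (hflat : IsInterFlat T (FrobTwist T p e)) (A : Ideal T) :
    A ≤ frobPow (p ^ e) (tilde (p ^ e) A) := by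
  rw [tilde, frobPow_sInf_of_isInterFlat hflat]
  exact le_iInf₂ fun _ hL ↦ hL

lemma gc_tilde_frobPow (hflat : IsInterFlat T (FrobTwist T p e)) :
    GaloisConnection (tilde (p ^ e)) (frobPow (R := T) (p ^ e)) :=
  fun A _ ↦ ⟨fun h ↦ (le_frobPow_tilde hflat A).trans (frobPow_mono _ h), fun h ↦ sInf_le h⟩

end Ideal

theorem stmt10_general {T : Type u} [CommRing T]
    (p : ℕ) [Fact p.Prime] [CharP T p]
    (e : ℕ) (hflat : IsInterFlat T (FrobTwist T p e))
    (s : ℕ) (A : Ideal T) (Ai : Fin s → Ideal T) (hA : A = ∑ i, Ai i) :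
    Ideal.tilde (p ^ e) A = ∑ i, Ideal.tilde (p ^ e) (Ai i) := by
  simp only [hA, Ideal.sum_eq_sup, Finset.sup_univ_eq_iSup]
  exact (Ideal.gc_tilde_frobPow hflat).l_iSup

/-- Let `T` be a Noetherian regular ring of prime characteristic `p`,
`e ≥ 1`, with `T^{1/p^e}` a `∩`-flat `T`-module.  If `A = A_1 + ⋯ + A_s` is a sum of
ideals of `T`, then `Ã^{(e)} = Ã_1^{(e)} + ⋯ + Ã_s^{(e)}`. -/
theorem stmt10 {T : Type u} [CommRing T] [IsNoetherianRing T]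
    (p : ℕ) [Fact p.Prime] [CharP T p] (hreg : IsRegularRing' T)
    (e : ℕ) (he : 1 ≤ e) (hflat : IsInterFlat T (FrobTwist T p e))
    (s : ℕ) (hs : 1 ≤ s) (A : Ideal T) (Ai : Fin s → Ideal T) (hA : A = ∑ i, Ai i) :
    Ideal.tilde (p ^ e) A = ∑ i, Ideal.tilde (p ^ e) (Ai i) :=
  stmt10_general p e hflat s A Ai hA
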